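/- For λ ∈ [0,1] and d ≥ 2, the maximal squared output 2-norm of the depolarized Werner–Holevo channel over pure input states equals ((d-2)λ² + 1)/(d-1); i.e., sup over unit vectors ψ of Tr(W_{λ,d}(|ψ⟩⟨ψ|)²) = ((d-2)λ² + 1)/(d-1), and the supremum is attained at ψ = (e₀ + i e₁)/√2. -/

import Mathlib

open Matrix Finset Kronecker

noncomputable section

/-- Outer product |ψ⟩⟨ψ|. -/
def outer {n : Type*} [Fintype n] (ψ : n → ℂ) : Matrix n n ℂ :=
  fun i j => ψ i * star (ψ j)

/-- Outer product |φ⟩⟨χ|. -/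
def outerLR {n : Type*} [Fintype n] (φ χ : n → ℂ) : Matrix n n ℂ :=
  fun i j => φ i * star (χ j)

/-- Inner product ⟨φ|χ⟩ (conjugate-linear in the first argument). -/
def cinner {n : Type*} [Fintype n] (φ χ : n → ℂ) : ℂ := ∑ i, star (φ i) * χ i

/-- Entrywise complex conjugate of a vector. -/
def conjVec {n : Type*} (ψ : n → ℂ) : n → ℂ := fun i => star (ψ i)

/-- Depolarized Werner–Holevo channel W_{λ,d}(ρ) = λρ + (1-λ)(Tr(ρ)·1 - ρᵀ)/(d-1). -/
def WH (d : ℕ) (lam : ℝ) (ρ : Matrix (Fin d) (Fin d) ℂ) : Matrix (Fin d) (Fin d) ℂ :=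
  (lam : ℂ) • ρ +
    (((1 - lam : ℝ) : ℂ) * ((d : ℂ) - 1)⁻¹) •
      (ρ.trace • (1 : Matrix (Fin d) (Fin d) ℂ) - ρ.transpose)

/-- Tensor product Φ₁ ⊗ Φ₂ of two linear maps on d×d matrices, acting on d²×d² matrices. -/
def tensorMap {d : ℕ}
    (Φ₁ Φ₂ : Matrix (Fin d) (Fin d) ℂ → Matrix (Fin d) (Fin d) ℂ)
    (M : Matrix (Fin d × Fin d) (Fin d × Fin d) ℂ) :
    Matrix (Fin d × Fin d) (Fin d × Fin d) ℂ :=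
  fun p q => ∑ i, ∑ j, ∑ k, ∑ l,
    M (i, k) (j, l) * (Φ₁ (Matrix.single i j 1)) p.1 q.1 *
      (Φ₂ (Matrix.single k l 1)) p.2 q.2

/-- Partial trace over the first tensor factor. -/
def ptr1 {d : ℕ} (M : Matrix (Fin d × Fin d) (Fin d × Fin d) ℂ) : Matrix (Fin d) (Fin d) ℂ :=
  fun i j => ∑ k, M (k, i) (k, j)

/-- Partial trace over the second tensor factor. -/
def ptr2 {d : ℕ} (M : Matrix (Fin d × Fin d) (Fin d × Fin d) ℂ) : Matrix (Fin d) (Fin d) ℂ :=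
  fun i j => ∑ k, M (i, k) (j, k)

/-- Partial transpose on the first tensor factor. -/
def pt1 {d : ℕ} (M : Matrix (Fin d × Fin d) (Fin d × Fin d) ℂ) :
    Matrix (Fin d × Fin d) (Fin d × Fin d) ℂ :=
  fun p q => M (q.1, p.2) (p.1, q.2)

/-- Partial transpose on the second tensor factor. -/
def pt2 {d : ℕ} (M : Matrix (Fin d × Fin d) (Fin d × Fin d) ℂ) :
    Matrix (Fin d × Fin d) (Fin d × Fin d) ℂ :=
  fun p q => M (p.1, q.2) (q.1, p.2)

/-!
Since `(|ψ⟩⟨ψ|)ᵀ = |ψ̄⟩⟨ψ̄|`, expanding `Tr (W(|ψ⟩⟨ψ|)²)` for a unit vector `ψ` leaves a single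
input-dependent term: it equals `((d-2)λ² + 1)/(d-1) - 2λ(1-λ)/(d-1) · |ψᵀψ|²`. For `λ ∈ [0,1]`
the correction is nonpositive, and it vanishes when `ψᵀψ = 0`, as for `(e₀ + i e₁)/√2`.
-/

section OuterProduct

variable {n : Type*} [Fintype n]

lemma trace_outer (ψ : n → ℂ) : (outer ψ).trace = cinner ψ ψ := by
  simp [Matrix.trace, outer, cinner, mul_comm]

lemma trace_outer_mul_outer (φ χ : n → ℂ) :
    (outer φ * outer χ).trace = cinner χ φ * cinner φ χ := by
  simp only [Matrix.trace, Matrix.diag, Matrix.mul_apply, outer, cinner, Finset.sum_mul_sum]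
  exact Finset.sum_congr rfl fun _ _ => Finset.sum_congr rfl fun _ _ => by ring

lemma transpose_outer (ψ : n → ℂ) : (outer ψ)ᵀ = outer (conjVec ψ) := by
  ext i j
  simp [outer, conjVec, mul_comm]

lemma cinner_conjVec_conjVec (ψ : n → ℂ) : cinner (conjVec ψ) (conjVec ψ) = cinner ψ ψ := by
  simp [cinner, conjVec, mul_comm]

lemma cinner_conjVec_right (ψ : n → ℂ) : cinner ψ (conjVec ψ) = star (cinner (conjVec ψ) ψ) := by
  simp [cinner, conjVec]

end OuterProduct

lemma trace_WH_outer_mul_self {d : ℕ} (hd : d ≠ 1) (lam : ℝ) {ψ : Fin d → ℂ}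
    (hψ : cinner ψ ψ = 1) :
    (WH d lam (outer ψ) * WH d lam (outer ψ)).trace =
      (((((d : ℝ) - 2) * lam ^ 2 + 1) / ((d : ℝ) - 1)
        - 2 * lam * (1 - lam) / ((d : ℝ) - 1) * Complex.normSq (cinner (conjVec ψ) ψ) : ℝ) : ℂ) := by
  have hd' : (d : ℂ) - 1 ≠ 0 := sub_ne_zero.mpr (by exact_mod_cast hd)
  have hnormSq : (Complex.normSq (cinner (conjVec ψ) ψ) : ℂ) =
      cinner ψ (conjVec ψ) * cinner (conjVec ψ) ψ := by
    rw [cinner_conjVec_right, Complex.normSq_eq_conj_mul_self]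
    rfl
  have hψ' : cinner (conjVec ψ) (conjVec ψ) = 1 := by rw [cinner_conjVec_conjVec, hψ]
  rw [WH, transpose_outer, trace_outer, hψ]
  simp only [one_smul, mul_add, add_mul, Matrix.smul_mul, Matrix.mul_smul, sub_mul, mul_sub,
    Matrix.mul_one, Matrix.one_mul, Matrix.trace_add, Matrix.trace_sub, Matrix.trace_smul,
    Matrix.trace_one, trace_outer_mul_outer, trace_outer, hψ, hψ', smul_eq_mul,
    Fintype.card_fin]
  push_cast
  rw [hnormSq]
  field_simp
  ring

section TwoSiteVector

variable {n : Type*} [Fintype n] [DecidableEq n]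

def twoSiteVec (i j : n) (c : ℂ) : n → ℂ :=
  fun k => if k = i then c else if k = j then Complex.I * c else 0

lemma sum_twoSiteVec_map {i j : n} (hij : i ≠ j) (c : ℂ) (f : ℂ → ℂ) (hf : f 0 = 0) :
    ∑ k, f (twoSiteVec i j c k) = f c + f (Complex.I * c) := by
  rw [Finset.sum_eq_add i j hij (fun k _ hk => by simp [twoSiteVec, hk.1, hk.2, hf])
    (by simp) (by simp)]
  simp [twoSiteVec, hij.symm]

lemma cinner_twoSiteVec {i j : n} (hij : i ≠ j) (c : ℂ) :
    cinner (twoSiteVec i j c) (twoSiteVec i j c) = 2 * Complex.normSq c := by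
  rw [cinner, sum_twoSiteVec_map hij c (fun z => star z * z) (by simp)]
  simp only [star_mul', Complex.star_def, Complex.conj_I, Complex.normSq_eq_conj_mul_self]
  linear_combination -(starRingEnd ℂ c * c) * Complex.I_sq

lemma cinner_conjVec_twoSiteVec {i j : n} (hij : i ≠ j) (c : ℂ) :
    cinner (conjVec (twoSiteVec i j c)) (twoSiteVec i j c) = 0 := by
  simp only [cinner, conjVec, star_star]
  rw [sum_twoSiteVec_map hij c (fun z => z * z) (by simp)]
  linear_combination c ^ 2 * Complex.I_sq

lemma cinner_twoSiteVec_inv_sqrt_two {i j : n} (hij : i ≠ j) :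
    cinner (twoSiteVec i j (Real.sqrt 2)⁻¹) (twoSiteVec i j (Real.sqrt 2)⁻¹) = 1 := by
  rw [cinner_twoSiteVec hij, Complex.normSq_inv, Complex.normSq_ofReal,
    Real.mul_self_sqrt zero_le_two]
  norm_num

end TwoSiteVector

lemma re_trace_WH_outer_mul_self_le {d : ℕ} (hd : 2 ≤ d) {lam : ℝ} (hlam : lam ∈ Set.Icc (0 : ℝ) 1)
    {ψ : Fin d → ℂ} (hψ : cinner ψ ψ = 1) :
    (WH d lam (outer ψ) * WH d lam (outer ψ)).trace.re ≤
      (((d : ℝ) - 2) * lam ^ 2 + 1) / ((d : ℝ) - 1) := by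
  rw [trace_WH_outer_mul_self (by omega) lam hψ, Complex.ofReal_re, sub_le_self_iff]
  have hd' : (0 : ℝ) ≤ (d : ℝ) - 1 := sub_nonneg.mpr (by exact_mod_cast one_le_two.trans hd)
  have hlam' : 0 ≤ 1 - lam := sub_nonneg.mpr hlam.2
  have := hlam.1
  have := Complex.normSq_nonneg (cinner (conjVec ψ) ψ)
  positivity

lemma re_trace_WH_outer_twoSiteVec_mul_self {d : ℕ} (hd : d ≠ 1) (lam : ℝ) {i j : Fin d} (hij : i ≠ j) :
    (WH d lam (outer (twoSiteVec i j (Real.sqrt 2)⁻¹)) *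
        WH d lam (outer (twoSiteVec i j (Real.sqrt 2)⁻¹))).trace.re =
      (((d : ℝ) - 2) * lam ^ 2 + 1) / ((d : ℝ) - 1) := by
  rw [trace_WH_outer_mul_self hd lam (cinner_twoSiteVec_inv_sqrt_two hij),
    cinner_conjVec_twoSiteVec hij]
  simp only [Complex.normSq_zero, mul_zero, sub_zero, Complex.ofReal_re]

theorem WH_maximal_output_two_norm (d : ℕ) (hd : 2 ≤ d) (lam : ℝ)
    (hlam : lam ∈ Set.Icc (0 : ℝ) 1) :
    IsGreatest {t : ℝ | ∃ ψ : Fin d → ℂ, cinner ψ ψ = 1 ∧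
        t = (WH d lam (outer ψ) * WH d lam (outer ψ)).trace.re}
      ((((d : ℝ) - 2) * lam ^ 2 + 1) / ((d : ℝ) - 1)) ∧
    (WH d lam (outer (fun i : Fin d =>
        if i = (⟨0, by omega⟩ : Fin d) then ((Real.sqrt 2)⁻¹ : ℂ)
        else if i = (⟨1, by omega⟩ : Fin d) then Complex.I * ((Real.sqrt 2)⁻¹ : ℂ) else 0)) *
      WH d lam (outer (fun i : Fin d =>
        if i = (⟨0, by omega⟩ : Fin d) then ((Real.sqrt 2)⁻¹ : ℂ)
        else if i = (⟨1, by omega⟩ : Fin d) then Complex.I * ((Real.sqrt 2)⁻¹ : ℂ) else 0))).trace.re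
      = (((d : ℝ) - 2) * lam ^ 2 + 1) / ((d : ℝ) - 1) := by
  have h01 : (⟨0, by omega⟩ : Fin d) ≠ ⟨1, by omega⟩ := by simp
  have hattain := re_trace_WH_outer_twoSiteVec_mul_self (by omega) lam h01
  refine ⟨⟨⟨_, cinner_twoSiteVec_inv_sqrt_two h01, hattain.symm⟩, ?_⟩, hattain⟩
  rintro t ⟨ψ, hψ, rfl⟩
  exact re_trace_WH_outer_mul_self_le hd hlam hψ
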